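/- arXiv:2002.07781 — 2 statements merged into one kernel-verified Lean document; each statement's English description precedes it below -/
import Mathlib

section
/- Let φ : [0,1] → ℝ be C³ with φ < 0 on (0,1), φ'' > 0 on (0,1), and φ''' < 0 on (0,1/2). Define Φ(x) = −x + (φ'(x) − √(φ'(x)² − 2φ(x)φ''(x)))/φ''(x). Then Φ is strictly decreasing on (0,1/2). -/
open Real Set

theorem Phi_strictAnti
    (φ φ' φ'' φ''' : ℝ → ℝ)
    (hd1 : ∀ x ∈ Set.Icc (0:ℝ) 1, HasDerivWithinAt φ (φ' x) (Set.Icc 0 1) x)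
    (hd2 : ∀ x ∈ Set.Icc (0:ℝ) 1, HasDerivWithinAt φ' (φ'' x) (Set.Icc 0 1) x)
    (hd3 : ∀ x ∈ Set.Icc (0:ℝ) 1, HasDerivWithinAt φ'' (φ''' x) (Set.Icc 0 1) x)
    (hc3 : ContinuousOn φ''' (Set.Icc 0 1))
    (hneg : ∀ x ∈ Set.Ioo (0:ℝ) 1, φ x < 0)
    (hconv : ∀ x ∈ Set.Ioo (0:ℝ) 1, 0 < φ'' x)
    (h3 : ∀ x ∈ Set.Ioo (0:ℝ) (1/2), φ''' x < 0)
    (Φ : ℝ → ℝ)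
    (hΦ : ∀ x, Φ x = -x + (φ' x - Real.sqrt (φ' x ^ 2 - 2 * φ x * φ'' x)) / φ'' x) :
    StrictAntiOn Φ (Set.Ioo 0 (1/2)) := by
  have hΦf : Φ = fun x => -x + (φ' x - Real.sqrt (φ' x ^ 2 - 2 * φ x * φ'' x)) / φ'' x :=
    funext hΦ
  rw [hΦf]
  have key : ∀ x ∈ Set.Ioo (0:ℝ) (1/2), ∃ v,
      HasDerivAt (fun x => -x + (φ' x - Real.sqrt (φ' x ^ 2 - 2 * φ x * φ'' x)) / φ'' x) v x
      ∧ v < 0 := by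
    intro x hx
    have hx1 : x ∈ Set.Ioo (0:ℝ) 1 := ⟨hx.1, lt_trans hx.2 (by norm_num)⟩
    have hxI : Set.Icc (0:ℝ) 1 ∈ nhds x := Icc_mem_nhds hx1.1 hx1.2
    have hxm : x ∈ Set.Icc (0:ℝ) 1 := ⟨le_of_lt hx1.1, le_of_lt hx1.2⟩
    have hφ : HasDerivAt φ (φ' x) x := (hd1 x hxm).hasDerivAt hxI
    have hφ' : HasDerivAt φ' (φ'' x) x := (hd2 x hxm).hasDerivAt hxI
    have hφ'' : HasDerivAt φ'' (φ''' x) x := (hd3 x hxm).hasDerivAt hxI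
    have ha : φ x < 0 := hneg x hx1
    have hw : 0 < φ'' x := hconv x hx1
    have ht : φ''' x < 0 := h3 x hx
    have hD : 0 < φ' x ^ 2 - 2 * φ x * φ'' x := by nlinarith [sq_nonneg (φ' x)]
    set s := Real.sqrt (φ' x ^ 2 - 2 * φ x * φ'' x) with hs_def
    have hs : 0 < s := Real.sqrt_pos.mpr hD
    have hs2 : s ^ 2 = φ' x ^ 2 - 2 * φ x * φ'' x := Real.sq_sqrt hD.le
    -- derivative of the inner function
    have hg : HasDerivAt (fun y => φ' y ^ 2 - 2 * φ y * φ'' y)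
        ((2 : ℕ) * φ' x ^ (2 - 1) * φ'' x - (2 * φ' x * φ'' x + 2 * φ x * φ''' x)) x := by
      exact (hφ'.pow 2).sub (((hφ.const_mul 2).mul hφ''))
    have hsq : HasDerivAt (fun y => Real.sqrt (φ' y ^ 2 - 2 * φ y * φ'' y))
        (((2 : ℕ) * φ' x ^ (2 - 1) * φ'' x - (2 * φ' x * φ'' x + 2 * φ x * φ''' x))
          / (2 * s)) x := hg.sqrt hD.ne'
    have hdiv : HasDerivAt (fun y => (φ' y - Real.sqrt (φ' y ^ 2 - 2 * φ y * φ'' y)) / φ'' y)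
        (((φ'' x - ((2 : ℕ) * φ' x ^ (2 - 1) * φ'' x - (2 * φ' x * φ'' x + 2 * φ x * φ''' x))
            / (2 * s)) * φ'' x - (φ' x - s) * φ''' x) / φ'' x ^ 2) x :=
      (hφ'.sub hsq).div hφ'' hw.ne'
    have hfull := (hasDerivAt_neg x).add hdiv
    refine ⟨_, hfull, ?_⟩
    -- now show the value is negative
    have hsu : φ' x < s := by nlinarith [sq_nonneg (s - φ' x), sq_nonneg (s + φ' x)]
    have hnum : φ x * φ''' x * φ'' x - (φ' x - s) * φ''' x * s < 0 := by
      nlinarith [mul_pos (sub_pos.2 hsu) (sub_pos.2 hsu), ht]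
    have hN : ((φ'' x - ((2 : ℕ) * φ' x ^ (2 - 1) * φ'' x -
          (2 * φ' x * φ'' x + 2 * φ x * φ''' x)) / (2 * s)) * φ'' x
          - (φ' x - s) * φ''' x) - φ'' x ^ 2
        = (φ x * φ''' x * φ'' x - (φ' x - s) * φ''' x * s) / s := by
      field_simp
      ring
    have hlt : ((φ'' x - ((2 : ℕ) * φ' x ^ (2 - 1) * φ'' x -
          (2 * φ' x * φ'' x + 2 * φ x * φ''' x)) / (2 * s)) * φ'' x
          - (φ' x - s) * φ''' x) < φ'' x ^ 2 := by
      have := div_neg_of_neg_of_pos hnum hs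
      linarith [hN ▸ this]
    have hdivlt : ((φ'' x - ((2 : ℕ) * φ' x ^ (2 - 1) * φ'' x -
          (2 * φ' x * φ'' x + 2 * φ x * φ''' x)) / (2 * s)) * φ'' x
          - (φ' x - s) * φ''' x) / φ'' x ^ 2 < 1 :=
      (div_lt_one (by positivity)).mpr hlt
    linarith
  apply strictAntiOn_of_deriv_neg (convex_Ioo _ _)
  · intro x hx
    obtain ⟨v, hv, _⟩ := key x hx
    exact hv.continuousAt.continuousWithinAt
  · intro x hx
    rw [isOpen_Ioo.interior_eq] at hx
    obtain ⟨v, hv, hv0⟩ := key x hx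
    rw [hv.deriv]
    exact hv0
end

section
/- Let φ : [0,1] → ℝ be C³, negative on (0,1), with φ'' > 0 on (0,1), symmetric about 1/2 (φ(x)=φ(1−x)), with φ''' < 0 on (0,1/2) and φ''' > 0 on (1/2,1). Then for any c > 1, the function M(x) = φ(x)/(x−c) has at most two points x ∈ (0,1) at which M''(x) = 0. -/
open Real Set

/-!
Writing `N(x) = φ''(x)(x-c)² - 2φ'(x)(x-c) + 2φ(x)`, one computes `M'' = N / (x-c)³` and
`N' = φ'''(x)(x-c)²`. Since `c ∉ (0,1)`, the zeros of `M''` in `(0,1)` are those of `N`, and the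
sign pattern of `φ'''` makes `N` strictly decreasing on `(0,1/2]` and strictly increasing on
`[1/2,1)`, so `N` vanishes at most once on each half.
-/

noncomputable def inflectionNumerator (f : ℝ → ℝ) (c x : ℝ) : ℝ :=
  deriv (deriv f) x * (x - c) ^ 2 - 2 * deriv f x * (x - c) + 2 * f x

section

variable {f : ℝ → ℝ} {U : Set ℝ} {c x : ℝ}

lemma hasDerivAt_sub_const_sq (c x : ℝ) : HasDerivAt (fun y => (y - c) ^ 2) (2 * (x - c)) x := by
  simpa using ((hasDerivAt_id' x).sub_const c).fun_pow 2

lemma deriv_div_sub_const_eq (hf : DifferentiableAt ℝ f x) (hxc : x ≠ c) :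
    deriv (fun y => f y / (y - c)) x = (deriv f x * (x - c) - f x) / (x - c) ^ 2 := by
  simpa using (hf.hasDerivAt.fun_div ((hasDerivAt_id' x).sub_const c) (sub_ne_zero.2 hxc)).deriv

lemma deriv_deriv_div_sub_const_eq (hU : IsOpen U) (hcU : c ∉ U) (hf : ContDiffOn ℝ 2 f U)
    (hx : x ∈ U) :
    deriv (deriv fun y => f y / (y - c)) x = inflectionNumerator f c x / (x - c) ^ 3 := by
  have hf₀ : ∀ y ∈ U, DifferentiableAt ℝ f y := fun y hy =>
    (hf.differentiableOn (by norm_num)).differentiableAt (hU.mem_nhds hy)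
  have hf₁ : DifferentiableAt ℝ (deriv f) x :=
    ((hf.deriv_of_isOpen (m := 1) hU (by norm_num)).differentiableOn
      (by norm_num)).differentiableAt (hU.mem_nhds hx)
  have hderiv : deriv (fun y => f y / (y - c)) =ᶠ[nhds x]
      fun y => (deriv f y * (y - c) - f y) / (y - c) ^ 2 :=
    Filter.eventually_of_mem (hU.mem_nhds hx) fun y hy => deriv_div_sub_const_eq (hf₀ y hy)
      (ne_of_mem_of_not_mem hy hcU)
  have hnum : HasDerivAt (fun y => deriv f y * (y - c) - f y) (deriv (deriv f) x * (x - c)) x :=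
    ((hf₁.hasDerivAt.fun_mul ((hasDerivAt_id' x).sub_const c)).fun_sub
      (hf₀ x hx).hasDerivAt).congr_deriv (by ring)
  have hxc : x - c ≠ 0 := sub_ne_zero.2 (ne_of_mem_of_not_mem hx hcU)
  rw [hderiv.deriv_eq, (hnum.fun_div (hasDerivAt_sub_const_sq c x) (pow_ne_zero 2 hxc)).deriv,
    inflectionNumerator]
  field_simp
  ring

lemma hasDerivAt_inflectionNumerator (hU : IsOpen U) (hf : ContDiffOn ℝ 3 f U) (hx : x ∈ U) :
    HasDerivAt (inflectionNumerator f c) (deriv (deriv (deriv f)) x * (x - c) ^ 2) x := by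
  have hf₁ := hf.deriv_of_isOpen (m := 2) hU (by norm_num)
  have hf₂ := hf₁.deriv_of_isOpen (m := 1) hU (by norm_num)
  have hd : ∀ {g : ℝ → ℝ} {n : ℕ}, ContDiffOn ℝ n g U → n ≠ 0 →
      HasDerivAt g (deriv g x) x :=
    fun hg hn => ((hg.differentiableOn (by exact_mod_cast hn)).differentiableAt
      (hU.mem_nhds hx)).hasDerivAt
  have hsub := (hasDerivAt_id' x).sub_const c
  exact ((((hd hf₂ one_ne_zero).fun_mul (hasDerivAt_sub_const_sq c x)).fun_sub
    (((hd hf₁ two_ne_zero).const_mul 2).fun_mul hsub)).fun_add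
    ((hd hf three_ne_zero).const_mul 2)).congr_deriv (by ring)

lemma strictAntiOn_inflectionNumerator {D : Set ℝ} (hU : IsOpen U) (hcU : c ∉ U)
    (hf : ContDiffOn ℝ 3 f U) (hD : Convex ℝ D) (hDU : D ⊆ U)
    (h3 : ∀ x ∈ interior D, deriv (deriv (deriv f)) x < 0) :
    StrictAntiOn (inflectionNumerator f c) D := by
  refine strictAntiOn_of_deriv_neg hD
    (fun x hx => (hasDerivAt_inflectionNumerator hU hf (hDU hx)).continuousAt.continuousWithinAt)
    fun x hx => ?_
  have hxU := hDU (interior_subset hx)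
  rw [(hasDerivAt_inflectionNumerator hU hf hxU).deriv]
  exact mul_neg_of_neg_of_pos (h3 x hx)
    (sq_pos_of_ne_zero (sub_ne_zero.2 (ne_of_mem_of_not_mem hxU hcU)))

lemma strictMonoOn_inflectionNumerator {D : Set ℝ} (hU : IsOpen U) (hcU : c ∉ U)
    (hf : ContDiffOn ℝ 3 f U) (hD : Convex ℝ D) (hDU : D ⊆ U)
    (h3 : ∀ x ∈ interior D, 0 < deriv (deriv (deriv f)) x) :
    StrictMonoOn (inflectionNumerator f c) D := by
  refine strictMonoOn_of_deriv_pos hD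
    (fun x hx => (hasDerivAt_inflectionNumerator hU hf (hDU hx)).continuousAt.continuousWithinAt)
    fun x hx => ?_
  have hxU := hDU (interior_subset hx)
  rw [(hasDerivAt_inflectionNumerator hU hf hxU).deriv]
  exact mul_pos (h3 x hx) (sq_pos_of_ne_zero (sub_ne_zero.2 (ne_of_mem_of_not_mem hxU hcU)))

end

lemma Set.InjOn.encard_sep_eq_le_one {α β : Type*} {g : α → β} {s : Set α} (h : InjOn g s)
    (y : β) : {x ∈ s | g x = y}.encard ≤ 1 :=
  encard_le_one_iff.2 fun _ _ ha hb => h ha.1 hb.1 (ha.2.trans hb.2.symm)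

lemma encard_sep_eq_le_two_of_injOn_of_injOn {α β : Type*} {g : α → β} {s t : Set α}
    (hs : InjOn g s) (ht : InjOn g t) (y : β) : {x ∈ s ∪ t | g x = y}.encard ≤ 2 :=
  calc {x ∈ s ∪ t | g x = y}.encard
      = ({x ∈ s | g x = y} ∪ {x ∈ t | g x = y}).encard := congrArg encard sep_union
    _ ≤ 1 + 1 := (encard_union_le _ _).trans (add_le_add (hs.encard_sep_eq_le_one y)
        (ht.encard_sep_eq_le_one y))
    _ = 2 := one_add_one_eq_two

theorem at_most_two_inflections_general
    (φ : ℝ → ℝ)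
    (hφ : ContDiffOn ℝ 3 φ (Set.Icc 0 1))
    (h3a : ∀ x ∈ Set.Ioo (0:ℝ) (1/2), deriv (deriv (deriv φ)) x < 0)
    (h3b : ∀ x ∈ Set.Ioo (1/2:ℝ) 1, 0 < deriv (deriv (deriv φ)) x)
    (c : ℝ) (hc : 1 < c)
    (M : ℝ → ℝ) (hM : ∀ x, M x = φ x / (x - c)) :
    Set.encard {x ∈ Set.Ioo (0:ℝ) 1 | deriv (deriv M) x = 0} ≤ 2 := by
  have hcU : c ∉ Ioo (0:ℝ) 1 := fun h => (h.2.trans hc).false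
  have hf : ContDiffOn ℝ 3 φ (Ioo 0 1) := hφ.mono Ioo_subset_Icc_self
  have hzeros : {x ∈ Ioo (0:ℝ) 1 | deriv (deriv M) x = 0}
      = {x ∈ Ioo (0:ℝ) 1 | inflectionNumerator φ c x = 0} := by
    obtain rfl : M = fun x => φ x / (x - c) := funext hM
    ext x
    refine and_congr_right fun hx => ?_
    have hxc : x - c ≠ 0 := sub_ne_zero.2 (ne_of_mem_of_not_mem hx hcU)
    rw [deriv_deriv_div_sub_const_eq isOpen_Ioo hcU (hf.of_le (by norm_num)) hx,
      div_eq_zero_iff, or_iff_left (pow_ne_zero 3 hxc)]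
  have hanti : StrictAntiOn (inflectionNumerator φ c) (Ioc 0 (1/2)) :=
    strictAntiOn_inflectionNumerator isOpen_Ioo hcU hf (convex_Ioc _ _)
      (Ioc_subset_Ioo_right (by norm_num)) (by simpa only [interior_Ioc] using h3a)
  have hmono : StrictMonoOn (inflectionNumerator φ c) (Ico (1/2) 1) :=
    strictMonoOn_inflectionNumerator isOpen_Ioo hcU hf (convex_Ico _ _)
      (Ico_subset_Ioo_left (by norm_num)) (by simpa only [interior_Ico] using h3b)
  rw [hzeros, ← Ioc_union_Ico_eq_Ioo (by norm_num : (0:ℝ) < 1/2) (by norm_num)]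
  exact encard_sep_eq_le_two_of_injOn_of_injOn hanti.injOn hmono.injOn 0

theorem at_most_two_inflections
    (φ : ℝ → ℝ)
    (hφ : ContDiffOn ℝ 3 φ (Set.Icc 0 1))
    (hneg : ∀ x ∈ Set.Ioo (0:ℝ) 1, φ x < 0)
    (hconv : ∀ x ∈ Set.Ioo (0:ℝ) 1, 0 < deriv (deriv φ) x)
    (hsym : ∀ x ∈ Set.Icc (0:ℝ) 1, φ x = φ (1 - x))
    (h3a : ∀ x ∈ Set.Ioo (0:ℝ) (1/2), deriv (deriv (deriv φ)) x < 0)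
    (h3b : ∀ x ∈ Set.Ioo (1/2:ℝ) 1, 0 < deriv (deriv (deriv φ)) x)
    (c : ℝ) (hc : 1 < c)
    (M : ℝ → ℝ) (hM : ∀ x, M x = φ x / (x - c)) :
    Set.encard {x ∈ Set.Ioo (0:ℝ) 1 | deriv (deriv M) x = 0} ≤ 2 :=
  at_most_two_inflections_general φ hφ h3a h3b c hc M hM
end
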